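/- Under the hypotheses of the previous statement (basic estimate ‖f‖² ≤ C(‖Sf‖² + ‖T*f‖²) on dom S ∩ dom T*), the range of T is closed and equals ker S. -/

import Mathlib

/-!
The kernel `K` of the closed operator `S` is a closed subspace containing `range T`. For
`f ∈ K` and `g ∈ dom T*`, write `g = p + q` with `p ∈ K`, `q ⊥ K`; then `q ⊥ range T`, so
`q ∈ ker T*`, and the basic estimate applied to `p ∈ dom S ∩ dom T*` (where `S p = 0`) gives
`|⟪f, g⟫| = |⟪f, p⟫| ≤ √C ‖f‖ ‖T* g‖`. Hence `T* g ↦ ⟪f, g⟫` is a bounded functional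
on `range T*`; by Hahn–Banach and Riesz it is `⟪u, ·⟫`, so `(u, f)` lies in the graph of
`T** = T` and `f ∈ range T`. Thus `range T = K`, which is closed.
-/

section

open LinearPMap WithLp

namespace Submodule

variable {𝕜 E F : Type*} [RCLike 𝕜]
  [NormedAddCommGroup E] [InnerProductSpace 𝕜 E] [CompleteSpace E]
  [NormedAddCommGroup F] [InnerProductSpace 𝕜 F] [CompleteSpace F]

theorem adjoint_adjoint_le {g : Submodule 𝕜 (E × F)} (hg : IsClosed (g : Set (E × F))) :
    g.adjoint.adjoint ≤ g := by
  intro x hx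
  set W : Submodule 𝕜 (WithLp 2 (E × F)) :=
    g.comap (WithLp.linearEquiv 2 𝕜 (E × F)).toLinearMap
  have : CompleteSpace W :=
    (hg.preimage (WithLp.prod_continuous_ofLp 2 E F)).completeSpace_coe
  suffices toLp 2 x ∈ Wᗮᗮ by rwa [orthogonal_orthogonal] at this
  intro w hw
  have hw' : (w.snd, -w.fst) ∈ g.adjoint := by
    rw [mem_adjoint_iff]
    intro a b hab
    have h := hw (toLp 2 (a, b)) hab
    rw [prod_inner_apply] at h
    simp only [ofLp_fst, ofLp_snd, inner_neg_right] at h ⊢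
    linear_combination h
  have h := (mem_adjoint_iff _ _).1 hx _ _ hw'
  rw [prod_inner_apply]
  simp only [ofLp_fst, ofLp_snd, inner_neg_left] at h ⊢
  linear_combination -h

end Submodule

namespace LinearPMap

section Kernel

variable {R E F : Type*} [Ring R] [AddCommGroup E] [Module R E] [AddCommGroup F] [Module R F]

def ker (S : E →ₗ.[R] F) : Submodule R E :=
  (LinearMap.ker S.toFun).map S.domain.subtype

theorem mem_ker_iff {S : E →ₗ.[R] F} {x : E} :
    x ∈ S.ker ↔ ∃ hx : x ∈ S.domain, S ⟨x, hx⟩ = 0 := by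
  constructor
  · rintro ⟨⟨y, hy⟩, h0, rfl⟩
    exact ⟨hy, h0⟩
  · rintro ⟨hx, h0⟩
    exact ⟨⟨x, hx⟩, h0, rfl⟩

end Kernel

theorem isClosed_ker {R E F : Type*} [CommRing R] [AddCommGroup E] [Module R E]
    [AddCommGroup F] [Module R F] [TopologicalSpace E] [TopologicalSpace F] {S : E →ₗ.[R] F}
    (hS : S.IsClosed) : _root_.IsClosed (S.ker : Set E) := by
  have : (S.ker : Set E) = (fun x => (x, (0 : F))) ⁻¹' S.graph := by
    ext x
    simp only [Set.mem_preimage, SetLike.mem_coe, mem_graph_iff, mem_ker_iff]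
    constructor
    · rintro ⟨hx, h0⟩
      exact ⟨⟨x, hx⟩, rfl, h0⟩
    · rintro ⟨⟨y, hy⟩, rfl, h0⟩
      exact ⟨hy, h0⟩
  rw [this]
  exact hS.preimage (continuous_id.prodMk continuous_const)

end LinearPMap

variable {𝕜 E F : Type*} [RCLike 𝕜]
  [NormedAddCommGroup E] [InnerProductSpace 𝕜 E] [CompleteSpace E]
  [NormedAddCommGroup F] [InnerProductSpace 𝕜 F]

local notation "⟪" x ", " y "⟫" => inner 𝕜 x y

theorem LinearMap.exists_inner_eq_of_norm_le {D : Type*} [AddCommGroup D] [Module 𝕜 D]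
    (A : D →ₗ[𝕜] E) (φ : D →ₗ[𝕜] 𝕜) (M : ℝ) (h : ∀ d, ‖φ d‖ ≤ M * ‖A d‖) :
    ∃ u : E, ∀ d, ⟪u, A d⟫ = φ d := by
  have hker : LinearMap.ker A ≤ LinearMap.ker φ := fun d hd => by
    simpa [LinearMap.mem_ker.1 hd] using h d
  set φ₀ : LinearMap.range A →ₗ[𝕜] 𝕜 :=
    (LinearMap.ker A).liftQ φ hker ∘ₗ A.quotKerEquivRange.symm.toLinearMap
  have hφ₀ : ∀ d, φ₀ ⟨A d, LinearMap.mem_range_self A d⟩ = φ d := fun d => by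
    simp [φ₀, LinearMap.quotKerEquivRange_symm_apply_image]
  have hbound : ∀ y, ‖φ₀ y‖ ≤ M * ‖y‖ := by
    rintro ⟨_, d, rfl⟩
    simpa [hφ₀] using h d
  obtain ⟨Φ, hΦ, -⟩ := exists_extension_norm_eq _ (φ₀.mkContinuous M hbound)
  refine ⟨(InnerProductSpace.toDual 𝕜 E).symm Φ, fun d => ?_⟩
  rw [InnerProductSpace.toDual_symm_apply, ← hφ₀]
  exact hΦ ⟨A d, LinearMap.mem_range_self A d⟩

namespace LinearPMap

variable {T : E →ₗ.[𝕜] F}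

theorem exists_adjoint_eq_zero_of_inner_eq_zero (hT : Dense (T.domain : Set E)) {y : F}
    (hy : ∀ x : T.domain, ⟪y, T x⟫ = 0) : ∃ hy' : y ∈ T†.domain, T† ⟨y, hy'⟩ = 0 := by
  have hy0 : ∀ x : T.domain, ⟪(0 : E), x⟫ = ⟪y, T x⟫ := fun x => by
    rw [inner_zero_left, hy]
  have hy' : y ∈ T†.domain := mem_adjoint_domain_of_exists y ⟨0, hy0⟩
  exact ⟨hy', adjoint_apply_eq hT ⟨y, hy'⟩ hy0⟩

theorem norm_inner_le_of_range_le {K : Submodule 𝕜 F} [K.HasOrthogonalProjection]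
    (hT : Dense (T.domain : Set E)) (hTK : LinearMap.range T.toFun ≤ K) {C : ℝ}
    (hC : ∀ x ∈ K, ∀ hx : x ∈ T†.domain, ‖x‖ ^ 2 ≤ C * ‖T† ⟨x, hx⟩‖ ^ 2)
    {f : F} (hf : f ∈ K) (g : T†.domain) :
    ‖⟪f, (g : F)⟫‖ ≤ √C * ‖f‖ * ‖T† g‖ := by
  set p := K.starProjection (g : F)
  have hq : (g : F) - p ∈ Kᗮ := K.sub_starProjection_mem_orthogonal _
  obtain ⟨hqT, hq0⟩ := exists_adjoint_eq_zero_of_inner_eq_zero hT fun x =>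
    (K.mem_orthogonal' _).1 hq _ (hTK ⟨x, rfl⟩)
  have hpT : p ∈ T†.domain := by simpa using sub_mem g.2 hqT
  have hTp : T† ⟨p, hpT⟩ = T† g := by
    rw [eq_comm, ← sub_eq_zero, ← map_sub, ← hq0]
    rfl
  have hp : ‖p‖ ≤ √C * ‖T† g‖ :=
    calc ‖p‖ = √(‖p‖ ^ 2) := (Real.sqrt_sq (norm_nonneg _)).symm
      _ ≤ √(C * ‖T† g‖ ^ 2) :=
        Real.sqrt_le_sqrt (hTp ▸ hC p (K.starProjection_apply_mem _) hpT)
      _ = √C * ‖T† g‖ := by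
        rw [Real.sqrt_mul' _ (sq_nonneg _), Real.sqrt_sq (norm_nonneg _)]
  have hfg : ⟪f, (g : F)⟫ = ⟪f, p⟫ := by
    rw [← sub_eq_zero, ← inner_sub_right]
    exact (K.mem_orthogonal _).1 hq f hf
  calc ‖⟪f, (g : F)⟫‖ = ‖⟪f, p⟫‖ := by rw [hfg]
    _ ≤ ‖f‖ * ‖p‖ := norm_inner_le_norm f p
    _ ≤ ‖f‖ * (√C * ‖T† g‖) := by gcongr
    _ = √C * ‖f‖ * ‖T† g‖ := by ring

variable [CompleteSpace F]

theorem mem_graph_of_inner_adjoint (hT : Dense (T.domain : Set E)) (hTc : T.IsClosed)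
    {u : E} {f : F} (h : ∀ g : T†.domain, ⟪u, T† g⟫ = ⟪f, (g : F)⟫) :
    (u, f) ∈ T.graph := by
  apply Submodule.adjoint_adjoint_le hTc
  rw [← adjoint_graph_eq_graph_adjoint hT, Submodule.mem_adjoint_iff]
  intro a b hab
  obtain ⟨g, rfl, rfl⟩ := T†.mem_graph_iff.1 hab
  rw [← inner_conj_symm, h, inner_conj_symm, sub_self]

theorem mem_range_of_norm_inner_le (hT : Dense (T.domain : Set E)) (hTc : T.IsClosed)
    {f : F} {M : ℝ} (h : ∀ g : T†.domain, ‖⟪f, (g : F)⟫‖ ≤ M * ‖T† g‖) :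
    f ∈ LinearMap.range T.toFun := by
  obtain ⟨u, hu⟩ :=
    T†.toFun.exists_inner_eq_of_norm_le ((innerₛₗ 𝕜 f).comp T†.domain.subtype) M h
  obtain ⟨v, -, hv⟩ := T.mem_graph_iff.1 (mem_graph_of_inner_adjoint hT hTc hu)
  exact ⟨v, hv⟩

end LinearPMap

end

theorem stmt_11_general {H₁ H₂ H₃ : Type*}
    [NormedAddCommGroup H₁] [InnerProductSpace ℂ H₁] [CompleteSpace H₁]
    [NormedAddCommGroup H₂] [InnerProductSpace ℂ H₂] [CompleteSpace H₂]
    [NormedAddCommGroup H₃] [InnerProductSpace ℂ H₃]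
    (T : H₁ →ₗ.[ℂ] H₂) (S : H₂ →ₗ.[ℂ] H₃)
    (hTdense : Dense (T.domain : Set H₁))
    (hTclosed : IsClosed (T.graph : Set (H₁ × H₂)))
    (hSclosed : IsClosed (S.graph : Set (H₂ × H₃)))
    (hST : ∀ x : T.domain, ∃ h : T x ∈ S.domain, S ⟨T x, h⟩ = 0)
    (C : ℝ)
    (hbasic : ∀ f : H₂, ∀ hfS : f ∈ S.domain, ∀ hfT : f ∈ T.adjoint.domain,
      ‖f‖ ^ 2 ≤ C * (‖S ⟨f, hfS⟩‖ ^ 2 + ‖T.adjoint ⟨f, hfT⟩‖ ^ 2)) :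
    IsClosed ((LinearMap.range T.toFun : Submodule ℂ H₂) : Set H₂) ∧
    (LinearMap.range T.toFun : Submodule ℂ H₂) =
      {f : H₂ | ∃ hf : f ∈ S.domain, S ⟨f, hf⟩ = 0} := by
  have hK : IsClosed (S.ker : Set H₂) := LinearPMap.isClosed_ker hSclosed
  have : CompleteSpace S.ker := hK.completeSpace_coe
  have hle : LinearMap.range T.toFun ≤ S.ker := by
    rintro _ ⟨x, rfl⟩
    exact LinearPMap.mem_ker_iff.2 (hST x)
  have hbound : ∀ x ∈ S.ker, ∀ hx : x ∈ T.adjoint.domain,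
      ‖x‖ ^ 2 ≤ C * ‖T.adjoint ⟨x, hx⟩‖ ^ 2 := by
    intro x hx hxT
    obtain ⟨hxS, hSx⟩ := LinearPMap.mem_ker_iff.1 hx
    simpa [hSx] using hbasic x hxS hxT
  have hrange : LinearMap.range T.toFun = S.ker := le_antisymm hle fun f hf =>
    LinearPMap.mem_range_of_norm_inner_le hTdense hTclosed
      (LinearPMap.norm_inner_le_of_range_le hTdense hle hbound hf)
  rw [hrange]
  exact ⟨hK, Set.ext fun _ => LinearPMap.mem_ker_iff⟩

/-- Under the basic estimate `‖f‖² ≤ C(‖Sf‖² + ‖T*f‖²)` on `dom S ∩ dom T*`, for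
densely defined closed operators `T : H₁ → H₂`, `S : H₂ → H₃` with `S ∘ T = 0`,
the range of `T` is closed and equals `ker S`. -/
theorem stmt_11 {H₁ H₂ H₃ : Type*}
    [NormedAddCommGroup H₁] [InnerProductSpace ℂ H₁] [CompleteSpace H₁]
    [NormedAddCommGroup H₂] [InnerProductSpace ℂ H₂] [CompleteSpace H₂]
    [NormedAddCommGroup H₃] [InnerProductSpace ℂ H₃] [CompleteSpace H₃]
    (T : H₁ →ₗ.[ℂ] H₂) (S : H₂ →ₗ.[ℂ] H₃)
    (hTdense : Dense (T.domain : Set H₁)) (hSdense : Dense (S.domain : Set H₂))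
    (hTclosed : IsClosed (T.graph : Set (H₁ × H₂)))
    (hSclosed : IsClosed (S.graph : Set (H₂ × H₃)))
    (hST : ∀ x : T.domain, ∃ h : T x ∈ S.domain, S ⟨T x, h⟩ = 0)
    (C : ℝ) (hC : 0 < C)
    (hbasic : ∀ f : H₂, ∀ hfS : f ∈ S.domain, ∀ hfT : f ∈ T.adjoint.domain,
      ‖f‖ ^ 2 ≤ C * (‖S ⟨f, hfS⟩‖ ^ 2 + ‖T.adjoint ⟨f, hfT⟩‖ ^ 2)) :
    IsClosed ((LinearMap.range T.toFun : Submodule ℂ H₂) : Set H₂) ∧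
    (LinearMap.range T.toFun : Submodule ℂ H₂) =
      {f : H₂ | ∃ hf : f ∈ S.domain, S ⟨f, hf⟩ = 0} :=
  stmt_11_general T S hTdense hTclosed hSclosed hST C hbasic
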